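/- arXiv:2006.13828 — 3 statements merged into one kernel-verified Lean document; each statement's English description precedes it below -/
import Mathlib

section
/- Let $b,\theta > 0$. If it is not the case that ($b \le 1/2$ and $\theta < 1 - 2b$), then the unique positive solution $(u,v)$ of the system $u=\left(\frac{v+b}{bv+1}\right)^2$, $v=\left(\frac{v+b}{bv+1}\right)\left(\frac{u+\theta}{\theta u+1}\right)$ is $(u,v)=(1,1)$. -/
theorem stmt_7 (b θ : ℝ) (hb : 0 < b) (hθ : 0 < θ)
    (h : ¬ (b ≤ 1/2 ∧ θ < 1 - 2 * b)) (u v : ℝ) (hu : 0 < u) (hv : 0 < v)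
    (h1 : u = ((v + b) / (b * v + 1))^2)
    (h2 : v = ((v + b) / (b * v + 1)) * ((u + θ) / (θ * u + 1))) :
    u = 1 ∧ v = 1 := by
  have hd1 : (0:ℝ) < b * v + 1 := by positivity
  set t := (v + b) / (b * v + 1) with htdef
  have ht0 : 0 < t := div_pos (by linarith) hd1
  have hT : t * (b * v + 1) = v + b := by
    rw [htdef]; field_simp
  subst h1
  have hd2 : (0:ℝ) < θ * t ^ 2 + 1 := by positivity
  have hV : v * (θ * t ^ 2 + 1) = t * (t ^ 2 + θ) := by
    field_simp at h2
    linarith [h2]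
  have e1 : v - t = b * (t * v - 1) := by linear_combination -hT
  have e2 : t ^ 3 - v = θ * t * (t * v - 1) := by linear_combination -hV
  have E : (t ^ 2 - 1) * (t - b * t ^ 2 - θ * t - b) = 0 := by
    linear_combination (1 - b * t) * e1 + (1 - b * t) * e2 + (θ * t + b) * t * e1
  have finish : t = 1 → t ^ 2 = 1 ∧ v = 1 := by
    intro ht1
    have hv1 : (1 + θ) * (v - 1) = 0 := by
      rw [ht1] at e2; linear_combination -e2
    have : v = 1 := by
      rcases mul_eq_zero.mp hv1 with h' | h'
      · linarith
      · linarith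
    exact ⟨by rw [ht1]; ring, this⟩
  rcases mul_eq_zero.mp E with hc | hc
  · have ht1 : t = 1 := by nlinarith
    exact finish ht1
  · -- b*(t^2+1) = (1-θ)*t
    have hkey : b * (t ^ 2 + 1) = (1 - θ) * t := by linarith
    have h2b : 2 * b ≤ 1 - θ := by nlinarith [sq_nonneg (t - 1), mul_pos hb ht0]
    push_neg at h
    have hb2 : b ≤ 1 / 2 := by linarith
    have hθ2 : 1 - 2 * b ≤ θ := h hb2
    have heq : 1 - θ = 2 * b := by linarith
    have hsq : b * (t - 1) ^ 2 = 0 := by linear_combination hkey + t * heq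
    have hsq2 : (t - 1) ^ 2 = 0 := by
      rcases mul_eq_zero.mp hsq with h' | h'
      · exact absurd h' (ne_of_gt hb)
      · exact h'
    have ht1 : t = 1 := by
      have := pow_eq_zero_iff (n := 2) (by norm_num) |>.mp hsq2
      linarith
    exact finish ht1
end

section
/- Let $b,\theta>0$ with $0 < b < 1/2$ and $\theta < 1-2b$. Then the system $u=\left(\frac{v+b}{bv+1}\right)^2$, $v=\left(\frac{v+b}{bv+1}\right)\left(\frac{u+\theta}{\theta u+1}\right)$ has exactly three solutions in positive reals: $(1,1)$, $(u_2,v_2)$, and $(u_3,v_3)$, where $v_{2,3} = \frac{-(b^2(3+\theta)+\theta-1) \mp (1-b^2)\sqrt{(\theta-1)^2-4b^2}}{2b(b^2+\theta)}$ and $u_i = \left(\frac{v_i+b}{bv_i+1}\right)^2$. -/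
lemma dna_aux (b θ u v : ℝ) (hb : 0 < b) (hθ : 0 < θ) (hu : 0 < u) (hv : 0 < v) :
    (u = ((v + b) / (b * v + 1))^2 ∧
      v = ((v + b) / (b * v + 1)) * ((u + θ) / (θ * u + 1))) ↔
    (u * (b * v + 1)^2 = (v + b)^2 ∧
      (v - 1) * (v + 1) * (b * (b^2 + θ) * v^2 + (b^2 * (3 + θ) + θ - 1) * v + b * (b^2 + θ)) = 0) := by
  have hbv : b * v + 1 ≠ 0 := by nlinarith
  have hθu : θ * u + 1 ≠ 0 := by nlinarith
  constructor
  · rintro ⟨h1, h2⟩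
    rw [div_mul_div_comm, eq_div_iff (mul_ne_zero hbv hθu)] at h2
    rw [div_pow, eq_div_iff (pow_ne_zero 2 hbv)] at h1
    refine ⟨h1, ?_⟩
    linear_combination (b*v+1)^2 * h2 - (θ * v * (b*v+1) - (v+b)) * h1
  · rintro ⟨h1', hP⟩
    have h1 : u = ((v + b) / (b * v + 1))^2 := by
      rw [div_pow, eq_div_iff (pow_ne_zero 2 hbv)]; exact h1'
    refine ⟨h1, ?_⟩
    rw [div_mul_div_comm, eq_div_iff (mul_ne_zero hbv hθu)]
    have hkey : (b * v + 1)^2 * (v * ((b * v + 1) * (θ * u + 1)) - (v + b) * (u + θ)) = 0 := by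
      linear_combination hP + (θ * v * (b * v + 1) - (v + b)) * h1'
    rcases mul_eq_zero.mp hkey with h | h
    · exact absurd h (pow_ne_zero 2 hbv)
    · linarith

theorem stmt_8 (b θ : ℝ) (hb : 0 < b) (hb2 : b < 1/2) (hθ : 0 < θ) (hθ2 : θ < 1 - 2 * b)
    (v2 v3 u2 u3 : ℝ)
    (hv2 : v2 = (-(b^2 * (3 + θ) + θ - 1) - (1 - b^2) * Real.sqrt ((θ - 1)^2 - 4 * b^2)) /
      (2 * b * (b^2 + θ)))
    (hv3 : v3 = (-(b^2 * (3 + θ) + θ - 1) + (1 - b^2) * Real.sqrt ((θ - 1)^2 - 4 * b^2)) /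
      (2 * b * (b^2 + θ)))
    (hu2 : u2 = ((v2 + b) / (b * v2 + 1))^2)
    (hu3 : u3 = ((v3 + b) / (b * v3 + 1))^2) :
    ∀ u v : ℝ, 0 < u → 0 < v →
      ((u = ((v + b) / (b * v + 1))^2 ∧
        v = ((v + b) / (b * v + 1)) * ((u + θ) / (θ * u + 1))) ↔
       ((u, v) = (1, 1) ∨ (u, v) = (u2, v2) ∨ (u, v) = (u3, v3))) := by
  set s := Real.sqrt ((θ - 1)^2 - 4 * b^2) with hsdef
  have hD : (0:ℝ) < (θ - 1)^2 - 4 * b^2 := by nlinarith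
  have hs2 : s^2 = (θ - 1)^2 - 4 * b^2 := Real.sq_sqrt hD.le
  have ha : (0:ℝ) < b * (b^2 + θ) := by positivity
  have haz : b * (b^2 + θ) ≠ 0 := ne_of_gt ha
  have h2a : (2 * b * (b^2 + θ)) ≠ 0 := by positivity
  have e2 : 2 * b * (b^2 + θ) * v2 = -(b^2 * (3 + θ) + θ - 1) - (1 - b^2) * s := by
    rw [hv2, mul_comm, div_mul_cancel₀ _ h2a]
  have e3 : 2 * b * (b^2 + θ) * v3 = -(b^2 * (3 + θ) + θ - 1) + (1 - b^2) * s := by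
    rw [hv3, mul_comm, div_mul_cancel₀ _ h2a]
  have key2' : (2 * b * (b^2 + θ))^2 *
      (b * (b^2 + θ) * v2^2 + (b^2 * (3 + θ) + θ - 1) * v2 + b * (b^2 + θ)) = 0 := by
    linear_combination (b*(b^2+θ)*(2*b*(b^2+θ)*v2 + (-(b^2*(3+θ)+θ-1) - (1-b^2)*s))
      + (b^2*(3+θ)+θ-1)*(2*b*(b^2+θ))) * e2 + (b*(b^2+θ)*(1-b^2)^2) * hs2
  have key3' : (2 * b * (b^2 + θ))^2 *
      (b * (b^2 + θ) * v3^2 + (b^2 * (3 + θ) + θ - 1) * v3 + b * (b^2 + θ)) = 0 := by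
    linear_combination (b*(b^2+θ)*(2*b*(b^2+θ)*v3 + (-(b^2*(3+θ)+θ-1) + (1-b^2)*s))
      + (b^2*(3+θ)+θ-1)*(2*b*(b^2+θ))) * e3 + (b*(b^2+θ)*(1-b^2)^2) * hs2
  have key2 : b * (b^2 + θ) * v2^2 + (b^2 * (3 + θ) + θ - 1) * v2 + b * (b^2 + θ) = 0 := by
    rcases mul_eq_zero.mp key2' with h | h
    · exact absurd h (pow_ne_zero 2 h2a)
    · exact h
  have key3 : b * (b^2 + θ) * v3^2 + (b^2 * (3 + θ) + θ - 1) * v3 + b * (b^2 + θ) = 0 := by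
    rcases mul_eq_zero.mp key3' with h | h
    · exact absurd h (pow_ne_zero 2 h2a)
    · exact h
  have hsum : b * (b^2 + θ) * (v2 + v3) = -(b^2 * (3 + θ) + θ - 1) := by
    linear_combination (1/2) * e2 + (1/2) * e3
  intro u v hu hv
  rw [dna_aux b θ u v hb hθ hu hv]
  constructor
  · rintro ⟨h1', hP⟩
    rcases mul_eq_zero.mp hP with h | hQ
    · rcases mul_eq_zero.mp h with h | h
      · -- v = 1
        have hveq : v = 1 := by linarith
        left
        have hbb : (b * (1:ℝ) + 1)^2 ≠ 0 := by positivity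
        rw [hveq] at h1'
        have hueq : u = 1 := mul_right_cancel₀ hbb (by linear_combination h1')
        rw [hueq, hveq]
      · exfalso; nlinarith
    · -- quadratic case
      have hfac : (v - v2) * (b * (b^2 + θ) * (v + v2) + (b^2 * (3 + θ) + θ - 1)) = 0 := by
        linear_combination hQ - key2
      rcases mul_eq_zero.mp hfac with h | h
      · -- v = v2
        right; left
        have hveq : v = v2 := by linarith
        rw [hveq] at h1' hv
        have hbv2 : (b * v2 + 1)^2 ≠ 0 := by positivity
        have hueq : u = u2 := by
          rw [hu2, div_pow, eq_div_iff hbv2]; linear_combination h1'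
        rw [hueq, hveq]
      · -- v = v3
        right; right
        have hveq : v = v3 := mul_left_cancel₀ haz (by linear_combination h - hsum)
        rw [hveq] at h1' hv
        have hbv3 : (b * v3 + 1)^2 ≠ 0 := by positivity
        have hueq : u = u3 := by
          rw [hu3, div_pow, eq_div_iff hbv3]; linear_combination h1'
        rw [hueq, hveq]
  · rintro (h | h | h) <;> simp only [Prod.mk.injEq] at h <;> obtain ⟨hue, hve⟩ := h
    · rw [hue, hve]; constructor
      · ring
      · ring
    · rw [hve] at hv
      have hbv2 : (b * v2 + 1)^2 ≠ 0 := by positivity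
      rw [hue, hve]
      constructor
      · rw [hu2, div_pow, div_mul_cancel₀ _ hbv2]
      · rw [show (v2 - 1) * (v2 + 1) *
          (b * (b^2 + θ) * v2^2 + (b^2 * (3 + θ) + θ - 1) * v2 + b * (b^2 + θ)) =
          (v2 - 1) * (v2 + 1) * 0 from by rw [key2], mul_zero]
    · rw [hve] at hv
      have hbv3 : (b * v3 + 1)^2 ≠ 0 := by positivity
      rw [hue, hve]
      constructor
      · rw [hu3, div_pow, div_mul_cancel₀ _ hbv3]
      · rw [show (v3 - 1) * (v3 + 1) *
          (b * (b^2 + θ) * v3^2 + (b^2 * (3 + θ) + θ - 1) * v3 + b * (b^2 + θ)) =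
          (v3 - 1) * (v3 + 1) * 0 from by rw [key3], mul_zero]
end

section
/- Let $b,\theta > 0$ with $0<b<1/2$, $\theta<1-2b$, and let $v_3 = \frac{(1-\theta-b^2(3+\theta)) + (1-b^2)\sqrt{(\theta-1)^2-4b^2}}{2b(b^2+\theta)}$. Then $v_3 > 1$ and $v_2 = 1/v_3 < 1$. -/
theorem stmt_16 (b θ : ℝ) (hb : 0 < b) (hb2 : b < 1/2) (hθ : 0 < θ) (hθ2 : θ < 1 - 2 * b)
    (v3 : ℝ)
    (hv3 : v3 = ((1 - θ - b^2 * (3 + θ)) + (1 - b^2) * Real.sqrt ((θ - 1)^2 - 4 * b^2)) /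
      (2 * b * (b^2 + θ))) :
    1 < v3 ∧ 1 / v3 < 1 := by
  have hs : 0 ≤ Real.sqrt ((θ - 1)^2 - 4 * b^2) := Real.sqrt_nonneg _
  have hd : 0 < 2 * b * (b^2 + θ) := by positivity
  have hb1 : b < 1 := by linarith
  have h1 : 1 < v3 := by
    rw [hv3, lt_div_iff₀ hd]
    nlinarith [hs, sq_nonneg b, mul_nonneg (by nlinarith : (0:ℝ) ≤ 1 - b^2) hs]
  exact ⟨h1, by rw [div_lt_one (by linarith)]; exact h1⟩
end
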